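/- Let Γ be a distance-regular graph with classical parameters (D, b, α, β) such that b ≥ 2 and D ≥ 3. Assume Γ has the PLS(γ) property for some γ ≥ 3, and assume Γ contains two distinct Delsarte vertices at distance at most two from each other. Then α is a non-negative integer and α ≤ b. -/

import Mathlib

open SimpleGraph

namespace DRGPaper

variable {V : Type*}

/-- `Γ` is a distance-regular graph with diameter `D` and intersection arrays `cc`, `aa`, `bb`:
`Γ` is connected of diameter `D` and for any vertices `x, y` at distance `i ≤ D`, `y` has exactly
`cc i` neighbours at distance `i - 1` from `x`, `aa i` neighbours at distance `i` from `x`,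
and `bb i` neighbours at distance `i + 1` from `x`. -/
def IsDRG [Fintype V] (G : SimpleGraph V) (D : ℕ) (cc aa bb : ℕ → ℕ) : Prop :=
  G.Connected ∧
  (∀ x y : V, G.dist x y ≤ D) ∧
  (∃ x y : V, G.dist x y = D) ∧
  ∀ i : ℕ, i ≤ D → ∀ x y : V, G.dist x y = i →
    {z : V | G.Adj y z ∧ G.dist x z = i - 1}.ncard = cc i ∧
    {z : V | G.Adj y z ∧ G.dist x z = i}.ncard = aa i ∧
    {z : V | G.Adj y z ∧ G.dist x z = i + 1}.ncard = bb i

/-- `[j] = (b^j - 1)/(b - 1) = 1 + b + ⋯ + b^(j-1)` as a real number. -/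
def gauss (b j : ℕ) : ℝ := ∑ i ∈ Finset.range j, (b : ℝ) ^ i

/-- `Γ` has classical parameters `(D, b, α, β)`: it is distance-regular of diameter `D` with
`bb i = ([D] - [i])(β - α[i])` for `0 ≤ i ≤ D - 1` and `cc i = [i](1 + α[i-1])` for
`1 ≤ i ≤ D`. -/
def HasClassicalParams [Fintype V] (G : SimpleGraph V) (D b : ℕ) (α β : ℝ)
    (cc aa bb : ℕ → ℕ) : Prop :=
  IsDRG G D cc aa bb ∧
  (∀ i : ℕ, i ≤ D - 1 → (bb i : ℝ) = (gauss b D - gauss b i) * (β - α * gauss b i)) ∧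
  (∀ i : ℕ, 1 ≤ i → i ≤ D → (cc i : ℝ) = gauss b i * (1 + α * gauss b (i - 1)))

/-- `d(x, C) = min {d(x, y) : y ∈ C}`. -/
noncomputable def distToSet (G : SimpleGraph V) (x : V) (C : Set V) : ℕ :=
  sInf (G.dist x '' C)

/-- A maximal clique of `G`. -/
def IsMaxClique (G : SimpleGraph V) (s : Set V) : Prop :=
  G.IsClique s ∧ ∀ t : Set V, G.IsClique t → s ⊆ t → t = s

/-- The lines for the PLS(γ) property: maximal cliques with at least `γ` vertices. -/
def plsLines (G : SimpleGraph V) (γ : ℕ) : Set (Set V) :=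
  {ℓ : Set V | IsMaxClique G ℓ ∧ γ ≤ ℓ.ncard}

/-- `G` is the point graph of the partial linear space with line set `L`: any two adjacent
vertices lie on exactly one common line of `L`. -/
def IsPointGraphOf (G : SimpleGraph V) (L : Set (Set V)) : Prop :=
  ∀ x y : V, G.Adj x y → ∃! ℓ : Set V, ℓ ∈ L ∧ x ∈ ℓ ∧ y ∈ ℓ

/-- A vertex is a Delsarte vertex (w.r.t. the line set `L` and classical parameter `β`) if all
lines through it have exactly `β + 1` vertices. -/
def IsDelsarteVertex (L : Set (Set V)) (β : ℝ) (x : V) : Prop :=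
  ∀ ℓ ∈ L, x ∈ ℓ → (ℓ.ncard : ℝ) = β + 1

/-- The lines for the SPLS(c, s) property: maximal cliques with at least
`a1 + 2 - (c - 1)(s - 1)` vertices. -/
def splsLines (G : SimpleGraph V) (a1 c s : ℕ) : Set (Set V) :=
  {ℓ : Set V | IsMaxClique G ℓ ∧ (a1 : ℤ) + 2 - ((c : ℤ) - 1) * ((s : ℤ) - 1) ≤ (ℓ.ncard : ℤ)}

/-- The SPLS(c, s) property: `G` is the point graph of the partial linear space whose lines are
the maximal cliques with at least `a1 + 2 - (c-1)(s-1)` vertices, `a1 ≥ (2s-1)(c-1)`, each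
vertex lies on at most `s` lines, and every point not on a line `ℓ` is collinear with at most
`c` points of `ℓ`.  SPLS(s) is the case `c = c₂`. -/
def HasSPLS (G : SimpleGraph V) (a1 c s : ℕ) : Prop :=
  1 ≤ c ∧ 2 ≤ s ∧
  (2 * (s : ℤ) - 1) * ((c : ℤ) - 1) ≤ (a1 : ℤ) ∧
  IsPointGraphOf G (splsLines G a1 c s) ∧
  (∀ x : V, {ℓ ∈ splsLines G a1 c s | x ∈ ℓ}.ncard ≤ s) ∧
  (∀ ℓ ∈ splsLines G a1 c s, ∀ x : V, x ∉ ℓ → {y ∈ ℓ | G.Adj x y}.ncard ≤ c)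

/-- `[x, y]`: the set of lines `ℓ ∈ L` through `x` such that `d(y, u) ≤ 2` for all `u ∈ ℓ`. -/
def lineXY (G : SimpleGraph V) (L : Set (Set V)) (x y : V) : Set (Set V) :=
  {ℓ ∈ L | x ∈ ℓ ∧ ∀ u ∈ ℓ, G.dist y u ≤ 2}

/-- `𝓒` witnesses that `G` is geometric with cliques of order `q`: every member of `𝓒` is a
clique with exactly `q` vertices and every edge of `G` lies in a unique member of `𝓒`. -/
def IsGeomLineSet (G : SimpleGraph V) (q : ℝ) (𝓒 : Set (Set V)) : Prop :=
  (∀ C ∈ 𝓒, G.IsClique C ∧ (C.ncard : ℝ) = q) ∧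
  ∀ x y : V, G.Adj x y → ∃! C : Set V, C ∈ 𝓒 ∧ x ∈ C ∧ y ∈ C

/-- `G` is geometric: there is a set of Delsarte cliques (cliques of the maximum order `q`)
such that every edge lies in a unique member. -/
def IsGeometric (G : SimpleGraph V) (q : ℝ) : Prop :=
  ∃ 𝓒 : Set (Set V), IsGeomLineSet G q 𝓒

/-- An assembly: a maximal clique which is not a line. -/
def IsAssembly (G : SimpleGraph V) (𝓒 : Set (Set V)) (M : Set V) : Prop :=
  IsMaxClique G M ∧ M ∉ 𝓒

/-- The dual Pasch axiom: for every pair of adjacent vertices `x, y`, the common neighbours of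
`x` and `y` outside the (any) line of `𝓒` through `x` and `y` form a clique. -/
def DualPasch (G : SimpleGraph V) (𝓒 : Set (Set V)) : Prop :=
  ∀ x y : V, G.Adj x y → ∀ ℓ ∈ 𝓒, x ∈ ℓ → y ∈ ℓ →
    G.IsClique {z : V | G.Adj x z ∧ G.Adj y z ∧ z ∉ ℓ}

/-- The `m × n` grid, i.e. the Cartesian product `K_m □ K_n`. -/
def gridGraph (m n : ℕ) : SimpleGraph (Fin m × Fin n) :=
  (⊤ : SimpleGraph (Fin m)).boxProd (⊤ : SimpleGraph (Fin n))

/-- The `A`-clique extension of a graph `H`: replace every vertex of `H` by a clique of size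
`A`, vertices in distinct cliques being adjacent exactly when the underlying vertices of `H`
are adjacent. -/
def cliqueExt {W : Type*} (H : SimpleGraph W) (A : ℕ) : SimpleGraph (W × Fin A) :=
  SimpleGraph.fromRel (fun p q => H.Adj p.1 q.1 ∨ p.1 = q.1)

/-- `θ` is an eigenvalue of the adjacency matrix of `G`. -/
def IsAdjEigenvalue [Fintype V] (G : SimpleGraph V) [DecidableRel G.Adj] (θ : ℝ) : Prop :=
  ∃ v : V → ℝ, v ≠ 0 ∧ (G.adjMatrix ℝ).mulVec v = θ • v

section Aux

set_option linter.unusedSectionVars false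
open Matrix


variable [Fintype V] {G : SimpleGraph V} {D b : ℕ} {α β : ℝ}
  {cc aa bb : ℕ → ℕ} {γ : ℕ}

/-! ### gauss lemmas -/

lemma gauss_zero : gauss b 0 = 0 := by simp [gauss]

lemma gauss_one : gauss b 1 = 1 := by simp [gauss]

lemma gauss_two : gauss b 2 = 1 + b := by
  simp [gauss, Finset.sum_range_succ]

lemma gauss_succ (j : ℕ) : gauss b (j + 1) = 1 + b * gauss b j := by
  simp only [gauss, geom_sum_succ]
  ring

lemma gauss_pos (hb : 2 ≤ b) {j : ℕ} (hj : 1 ≤ j) : 0 < gauss b j := by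
  apply Finset.sum_pos
  · intro i _
    positivity
  · exact ⟨0, Finset.mem_range.2 hj⟩

lemma gauss_lt (hb : 2 ≤ b) {i j : ℕ} (hij : i < j) : gauss b i < gauss b j := by
  apply Finset.sum_lt_sum_of_subset (Finset.range_subset_range.2 hij.le)
    (i := i) (Finset.mem_range.2 hij) (by simp)
  · positivity
  · intro k _ _
    positivity

lemma gauss_nonneg : 0 ≤ gauss b j := by
  apply Finset.sum_nonneg
  intro i _
  positivity

/-! ### distance lemmas -/

lemma exists_prev (hconn : G.Connected) {u v : V} {n : ℕ} (h : G.dist u v = n + 1) :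
    ∃ w, G.Adj w v ∧ G.dist u w = n := by
  obtain ⟨p, hp⟩ := hconn.exists_walk_length_eq_dist u v
  rw [h] at hp
  have hpr : p.reverse.length = n + 1 := by rwa [SimpleGraph.Walk.length_reverse]
  cases hq : p.reverse with
  | nil => rw [hq] at hpr; simp at hpr
  | cons hadj q =>
    rename_i w
    rw [hq] at hpr
    simp only [SimpleGraph.Walk.length_cons] at hpr
    have hqlen : q.length = n := by omega
    refine ⟨w, hadj.symm, le_antisymm ?_ ?_⟩
    · calc G.dist u w = G.dist w u := dist_comm ..
        _ ≤ q.length := SimpleGraph.dist_le q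
        _ = n := hqlen
    · have htri : G.dist u v ≤ G.dist u w + G.dist w v := hconn.dist_triangle
      have : G.dist w v = 1 := dist_eq_one_iff_adj.mpr hadj.symm
      omega

lemma dist_down (hconn : G.Connected) :
    ∀ n (u v : V), G.dist u v = n → ∀ j ≤ n, ∃ w, G.dist u w = j := by
  intro n
  induction n with
  | zero =>
    intro u v h j hj
    exact ⟨v, by omega⟩
  | succ n ih =>
    intro u v h j hj
    rcases Nat.eq_or_lt_of_le hj with rfl | hlt
    · exact ⟨v, h⟩
    · obtain ⟨w, _, hw⟩ := exists_prev hconn h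
      exact ih u w hw j (by omega)



/-- Abbreviation for the DRG counting hypothesis. -/
def Cnt (G : SimpleGraph V) (D : ℕ) (cc aa bb : ℕ → ℕ) : Prop :=
  ∀ i : ℕ, i ≤ D → ∀ x y : V, G.dist x y = i →
    {z : V | G.Adj y z ∧ G.dist x z = i - 1}.ncard = cc i ∧
    {z : V | G.Adj y z ∧ G.dist x z = i}.ncard = aa i ∧
    {z : V | G.Adj y z ∧ G.dist x z = i + 1}.ncard = bb i

lemma nbr_dist_le (hconn : G.Connected) {u v z : V} (hz : G.Adj v z) :
    G.dist u z ≤ G.dist u v + 1 ∧ G.dist u v ≤ G.dist u z + 1 := by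
  have h1 : G.dist v z = 1 := dist_eq_one_iff_adj.mpr hz
  have h2 : G.dist z v = 1 := dist_eq_one_iff_adj.mpr hz.symm
  constructor
  · have := hconn.dist_triangle (u := u) (v := v) (w := z); omega
  · have := hconn.dist_triangle (u := u) (v := z) (w := v); omega

lemma deg_eq (hcnt : Cnt G D cc aa bb) (v : V) :
    {z : V | G.Adj v z}.ncard = bb 0 := by
  have h := (hcnt 0 (Nat.zero_le D) v v (dist_self)).2.2
  rw [← h]
  congr 1
  ext z
  simp only [Set.mem_setOf_eq, zero_add]
  exact ⟨fun hz => ⟨hz, dist_eq_one_iff_adj.mpr hz⟩, fun hz => hz.1⟩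

lemma cc_ge_one (hconn : G.Connected) (hcnt : Cnt G D cc aa bb)
    {j : ℕ} (hj1 : 1 ≤ j) (hjD : j ≤ D) {u v : V} (huv : G.dist u v = j) :
    1 ≤ cc j := by
  obtain ⟨n, rfl⟩ : ∃ n, j = n + 1 := ⟨j - 1, by omega⟩
  obtain ⟨w, hw, hwd⟩ := exists_prev hconn huv
  have h := (hcnt (n+1) hjD u v huv).1
  rw [← h]
  have : w ∈ {z : V | G.Adj v z ∧ G.dist u z = n + 1 - 1} := ⟨hw.symm, by simpa using hwd⟩
  exact Set.ncard_pos (Set.toFinite _) |>.mpr ⟨w, this⟩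

lemma bb_ge_one (hconn : G.Connected) (hcnt : Cnt G D cc aa bb)
    {j : ℕ} (hjD : j < D) {u v : V} (huv : G.dist u v = j + 1) :
    1 ≤ bb j := by
  obtain ⟨w, hw, hwd⟩ := exists_prev hconn huv
  have h := (hcnt j (by omega) u w hwd).2.2
  rw [← h]
  have : v ∈ {z : V | G.Adj w z ∧ G.dist u z = j + 1} := ⟨hw, huv⟩
  exact Set.ncard_pos (Set.toFinite _) |>.mpr ⟨v, this⟩

lemma bb_D_eq_zero (hcnt : Cnt G D cc aa bb) (hdle : ∀ x y : V, G.dist x y ≤ D)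
    {u v : V} (huv : G.dist u v = D) : bb D = 0 := by
  have h := (hcnt D le_rfl u v huv).2.2
  rw [← h]
  convert Set.ncard_empty V
  ext z
  simp only [Set.mem_setOf_eq, Set.mem_empty_iff_false, iff_false, not_and]
  intro _
  have := hdle u z
  omega

lemma cc_aa_bb_sum (hconn : G.Connected) (hcnt : Cnt G D cc aa bb)
    {j : ℕ} (hj1 : 1 ≤ j) (hjD : j ≤ D) {u v : V} (huv : G.dist u v = j) :
    cc j + aa j + bb j = bb 0 := by
  obtain ⟨h1, h2, h3⟩ := hcnt j hjD u v huv
  have hN := deg_eq hcnt v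
  rw [← h1, ← h2, ← h3, ← hN]
  have hsplit : {z : V | G.Adj v z} =
      ({z : V | G.Adj v z ∧ G.dist u z = j - 1} ∪ {z : V | G.Adj v z ∧ G.dist u z = j}) ∪
      {z : V | G.Adj v z ∧ G.dist u z = j + 1} := by
    ext z
    simp only [Set.mem_union, Set.mem_setOf_eq]
    constructor
    · intro hz
      obtain ⟨b1, b2⟩ := nbr_dist_le hconn (u := u) hz
      rw [huv] at b1 b2
      rcases Nat.lt_trichotomy (G.dist u z) j with hlt | heq | hgt
      · exact Or.inl (Or.inl ⟨hz, by omega⟩)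
      · exact Or.inl (Or.inr ⟨hz, heq⟩)
      · exact Or.inr ⟨hz, by omega⟩
    · rintro ((⟨hz, _⟩ | ⟨hz, _⟩) | ⟨hz, _⟩) <;> exact hz
  rw [hsplit]
  rw [Set.ncard_union_eq ?_ (Set.toFinite _) (Set.toFinite _),
      Set.ncard_union_eq ?_ (Set.toFinite _) (Set.toFinite _)]
  · rw [Set.disjoint_left]
    rintro z ⟨_, hd⟩ ⟨_, hd'⟩
    omega
  · rw [Set.disjoint_left]
    rintro z (⟨_, hd⟩ | ⟨_, hd⟩) ⟨_, hd'⟩ <;> omega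



/-! ### chunk 3: positivity -/

lemma realized (hconn : G.Connected) (exD : ∃ u v : V, G.dist u v = D) :
    ∀ j ≤ D, ∃ u v : V, G.dist u v = j := by
  obtain ⟨u, v, huv⟩ := id exD
  intro j hj
  obtain ⟨w, hw⟩ := dist_down hconn D u v huv j hj
  exact ⟨u, w, hw⟩

lemma k_eq (hbbf : ∀ i : ℕ, i ≤ D - 1 → (bb i : ℝ) = (gauss b D - gauss b i) * (β - α * gauss b i))
    (hD3 : 3 ≤ D) : (bb 0 : ℝ) = gauss b D * β := by
  have h := hbbf 0 (by omega)
  rw [h, gauss_zero]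
  ring

lemma bbR (hconn : G.Connected) (hcnt : Cnt G D cc aa bb) (hdle : ∀ x y : V, G.dist x y ≤ D)
    (exD : ∃ u v : V, G.dist u v = D)
    (hbbf : ∀ i : ℕ, i ≤ D - 1 → (bb i : ℝ) = (gauss b D - gauss b i) * (β - α * gauss b i))
    (hD3 : 3 ≤ D) :
    ∀ j ≤ D, (bb j : ℝ) = (gauss b D - gauss b j) * (β - α * gauss b j) := by
  intro j hj
  rcases Nat.lt_or_ge j D with hlt | hge
  · exact hbbf j (by omega)
  · have hjD : j = D := by omega
    subst hjD
    obtain ⟨u, v, huv⟩ := id exD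
    rw [bb_D_eq_zero hcnt hdle huv]
    simp

lemma beta_pos (hconn : G.Connected) (hcnt : Cnt G D cc aa bb)
    (exD : ∃ u v : V, G.dist u v = D)
    (hbbf : ∀ i : ℕ, i ≤ D - 1 → (bb i : ℝ) = (gauss b D - gauss b i) * (β - α * gauss b i))
    (hb : 2 ≤ b) (hD3 : 3 ≤ D) : 0 < β := by
  obtain ⟨u, v, huv⟩ := realized hconn exD 1 (by omega)
  have h1 : 1 ≤ bb 0 := bb_ge_one hconn hcnt (by omega) (by simpa using huv)
  have h2 : (bb 0 : ℝ) = gauss b D * β := k_eq hbbf hD3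
  have h3 : (1 : ℝ) ≤ (bb 0 : ℝ) := by exact_mod_cast h1
  have h4 : 0 < gauss b D := gauss_pos hb (by omega)
  nlinarith

lemma beta_sub_pos (hconn : G.Connected) (hcnt : Cnt G D cc aa bb)
    (exD : ∃ u v : V, G.dist u v = D)
    (hbbf : ∀ i : ℕ, i ≤ D - 1 → (bb i : ℝ) = (gauss b D - gauss b i) * (β - α * gauss b i))
    (hb : 2 ≤ b) (hD3 : 3 ≤ D) :
    ∀ j < D, 0 < β - α * gauss b j := by
  intro j hj
  obtain ⟨u, v, huv⟩ := realized hconn exD (j + 1) (by omega)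
  have h1 : 1 ≤ bb j := bb_ge_one hconn hcnt hj huv
  have h2 : (bb j : ℝ) = (gauss b D - gauss b j) * (β - α * gauss b j) := hbbf j (by omega)
  have h3 : (1 : ℝ) ≤ (bb j : ℝ) := by exact_mod_cast h1
  have h4 : 0 < gauss b D - gauss b j := by
    have := gauss_lt (b := b) hb hj; linarith
  nlinarith

lemma one_add_pos (hconn : G.Connected) (hcnt : Cnt G D cc aa bb)
    (exD : ∃ u v : V, G.dist u v = D)
    (hccf : ∀ i : ℕ, 1 ≤ i → i ≤ D → (cc i : ℝ) = gauss b i * (1 + α * gauss b (i - 1)))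
    (hb : 2 ≤ b) :
    ∀ j < D, 0 < 1 + α * gauss b j := by
  intro j hj
  obtain ⟨u, v, huv⟩ := realized hconn exD (j + 1) (by omega)
  have h1 : 1 ≤ cc (j + 1) := cc_ge_one hconn hcnt (by omega) (by omega) huv
  have h2 : (cc (j+1) : ℝ) = gauss b (j+1) * (1 + α * gauss b j) := by
    have := hccf (j+1) (by omega) (by omega)
    simpa using this
  have h3 : (1 : ℝ) ≤ (cc (j+1) : ℝ) := by exact_mod_cast h1
  have h4 : 0 < gauss b (j + 1) := gauss_pos hb (by omega)
  nlinarith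

lemma aaR (hconn : G.Connected) (hcnt : Cnt G D cc aa bb)
    (exD : ∃ u v : V, G.dist u v = D)
    (hbbf : ∀ i : ℕ, i ≤ D - 1 → (bb i : ℝ) = (gauss b D - gauss b i) * (β - α * gauss b i))
    (hD3 : 3 ≤ D) :
    ∀ j, 1 ≤ j → j ≤ D → (aa j : ℝ) = gauss b D * β - (cc j : ℝ) - (bb j : ℝ) := by
  intro j hj1 hjD
  obtain ⟨u, v, huv⟩ := realized hconn exD j hjD
  have hsum : cc j + aa j + bb j = bb 0 := cc_aa_bb_sum hconn hcnt hj1 hjD huv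
  have hk : (bb 0 : ℝ) = gauss b D * β := k_eq hbbf hD3
  have : (cc j : ℝ) + (aa j : ℝ) + (bb j : ℝ) = (bb 0 : ℝ) := by exact_mod_cast hsum
  linarith

/-! ### chunk 4: the u-sequence and its three-term recurrence -/

noncomputable def useq (b : ℕ) (α β : ℝ) (j : ℕ) : ℝ :=
  ∏ h ∈ Finset.range j, (-(1 + α * gauss b h) / (β - α * gauss b h))

lemma useq_zero : useq b α β 0 = 1 := by simp [useq]

lemma useq_succ (j : ℕ) :
    useq b α β (j + 1) = useq b α β j * (-(1 + α * gauss b j) / (β - α * gauss b j)) := by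
  simp only [useq, Finset.prod_range_succ]

lemma useq_one : useq b α β 1 = -(1 / β) := by
  rw [show (1 : ℕ) = 0 + 1 from rfl, useq_succ, useq_zero, gauss_zero]
  ring

lemma key_identity (bR T s α β : ℝ) (h1 : β - α * s ≠ 0) (h2 : β - α * (1 + bR * s) ≠ 0) :
    (1 + bR * s) * (1 + α * s)
      + (-(1 + α * s) / (β - α * s)) *
        (T * β - (1 + bR * s) * (1 + α * s) - (T - (1 + bR * s)) * (β - α * (1 + bR * s)))
      + (-(1 + α * s) / (β - α * s)) * (-(1 + α * (1 + bR * s)) / (β - α * (1 + bR * s))) *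
        ((T - (1 + bR * s)) * (β - α * (1 + bR * s)))
    = (-T) * (-(1 + α * s) / (β - α * s)) := by
  have e : (-(1 + α * (1 + bR * s)) / (β - α * (1 + bR * s))) * ((T - (1 + bR * s)) * (β - α * (1 + bR * s))) = -(1 + α * (1 + bR * s)) * (T - (1 + bR * s)) := by
    rw [mul_comm (T - _), ← mul_assoc, div_mul_cancel₀ _ h2]
  rw [mul_assoc _ (-(1 + α * (1 + bR * s)) / _), e]
  generalize hA : β - α * s = A at h1 ⊢
  obtain rfl : β = A + α * s := by linarith
  field_simp
  ring

lemma key_identity_D (T s α β : ℝ) (h1 : β - α * s ≠ 0) :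
    T * (1 + α * s) + (-(1 + α * s) / (β - α * s)) * (T * β - T * (1 + α * s))
    = (-T) * (-(1 + α * s) / (β - α * s)) := by
  field_simp
  ring

lemma urec (hconn : G.Connected) (hcnt : Cnt G D cc aa bb) (hdle : ∀ x y : V, G.dist x y ≤ D)
    (exD : ∃ u v : V, G.dist u v = D)
    (hbbf : ∀ i : ℕ, i ≤ D - 1 → (bb i : ℝ) = (gauss b D - gauss b i) * (β - α * gauss b i))
    (hccf : ∀ i : ℕ, 1 ≤ i → i ≤ D → (cc i : ℝ) = gauss b i * (1 + α * gauss b (i - 1)))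
    (hb : 2 ≤ b) (hD3 : 3 ≤ D) :
    ∀ j, 1 ≤ j → j ≤ D →
      useq b α β (j - 1) * (cc j : ℝ) + useq b α β j * (aa j : ℝ)
        + useq b α β (j + 1) * (bb j : ℝ)
      = (-(gauss b D)) * useq b α β j := by
  intro j hj1 hjD
  obtain ⟨n, rfl⟩ : ∃ n, j = n + 1 := ⟨j - 1, by omega⟩
  have hccj : (cc (n+1) : ℝ) = gauss b (n+1) * (1 + α * gauss b n) := by
    have := hccf (n+1) (by omega) hjD
    simpa using this
  have hbbj : (bb (n+1) : ℝ) = (gauss b D - gauss b (n+1)) * (β - α * gauss b (n+1)) :=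
    bbR hconn hcnt hdle exD hbbf hD3 (n+1) hjD
  have haaj : (aa (n+1) : ℝ) = gauss b D * β - (cc (n+1) : ℝ) - (bb (n+1) : ℝ) :=
    aaR hconn hcnt exD hbbf hD3 (n+1) (by omega) hjD
  have hu1 : useq b α β (n + 1) = useq b α β n * (-(1 + α * gauss b n) / (β - α * gauss b n)) :=
    useq_succ n
  have hu2 : useq b α β (n + 2) =
      useq b α β (n+1) * (-(1 + α * gauss b (n+1)) / (β - α * gauss b (n+1))) :=
    useq_succ (n+1)
  have hd1 : β - α * gauss b n ≠ 0 :=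
    (beta_sub_pos hconn hcnt exD hbbf hb hD3 n (by omega)).ne'
  simp only [Nat.add_sub_cancel]
  rcases Nat.lt_or_ge (n + 1) D with hlt | hge
  · have hd2 : β - α * gauss b (n+1) ≠ 0 :=
      (beta_sub_pos hconn hcnt exD hbbf hb hD3 (n+1) hlt).ne'
    have hgs : gauss b (n+1) = 1 + (b : ℝ) * gauss b n := gauss_succ n
    rw [haaj, hccj, hbbj, hu2, hu1, hgs]
    have key := key_identity (b : ℝ) (gauss b D) (gauss b n) α β hd1 (by rwa [← hgs])
    rw [← hgs] at key ⊢
    linear_combination useq b α β n * key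
  · have hDn : D = n + 1 := by omega
    have hbb0 : (bb (n+1) : ℝ) = 0 := by
      obtain ⟨u, v, huv⟩ := id exD
      rw [← hDn] at *
      exact_mod_cast congrArg (Nat.cast : ℕ → ℝ) (bb_D_eq_zero hcnt hdle huv)
    have hgDn : gauss b D = gauss b (n+1) := by rw [hDn]
    have hgn : gauss b ((n+1) - 1) = gauss b n := by simp
    rw [haaj, hccj, hbb0, hu1, hgDn]
    have key := key_identity_D (gauss b (n+1)) (gauss b n) α β hd1
    linear_combination useq b α β n * key

/-! ### chunk 5: distance matrices -/

noncomputable def dmat (G : SimpleGraph V) (i : ℕ) : Matrix V V ℝ :=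
  Matrix.of fun p q => if G.dist p q = i then 1 else 0

noncomputable def Mmat (G : SimpleGraph V) (D b : ℕ) (α β : ℝ) : Matrix V V ℝ :=
  ∑ i ∈ Finset.range (D + 1), useq b α β i • dmat G i

lemma dmat_apply (i : ℕ) (p q : V) :
    dmat G i p q = if G.dist p q = i then 1 else 0 := rfl

lemma dmat_zero [DecidableEq V] (hconn : G.Connected) : dmat G 0 = (1 : Matrix V V ℝ) := by
  ext p q
  rw [dmat_apply, Matrix.one_apply]
  by_cases h : p = q
  · simp [h]
  · have : ¬ (G.dist p q = 0) := by
      rw [hconn.dist_eq_zero_iff]; exact h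
    simp [h, this]

lemma Mmat_apply (hdle : ∀ x y : V, G.dist x y ≤ D) (p q : V) :
    Mmat G D b α β p q = useq b α β (G.dist p q) := by
  rw [Mmat, Matrix.sum_apply]
  rw [Finset.sum_eq_single_of_mem (G.dist p q)
      (Finset.mem_range.2 (by have := hdle p q; omega))]
  · rw [Matrix.smul_apply, dmat_apply, if_pos rfl, smul_eq_mul, mul_one]
  · intro i _ hne
    rw [Matrix.smul_apply, dmat_apply, if_neg (fun hh => hne hh.symm), smul_eq_mul, mul_zero]

lemma Mmat_symm (hdle : ∀ x y : V, G.dist x y ≤ D) (p q : V) :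
    Mmat G D b α β p q = Mmat G D b α β q p := by
  rw [Mmat_apply hdle, Mmat_apply hdle, dist_comm]

/-- The sum of `f` over the neighbours of `q`, in filter form. -/
lemma sum_over_nbrs (f : V → ℝ) (q : V) [DecidableRel G.Adj] :
    (∑ r : V, f r * (if G.dist r q = 1 then (1:ℝ) else 0))
      = ∑ r ∈ Finset.univ.filter (fun r => G.Adj q r), f r := by
  rw [Finset.sum_filter]
  apply Finset.sum_congr rfl
  intro r _
  by_cases h : G.Adj q r
  · rw [if_pos h, if_pos (dist_eq_one_iff_adj.mpr h.symm), mul_one]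
  · rw [if_neg h, if_neg (fun hd => h (dist_eq_one_iff_adj.mp hd).symm), mul_zero]

lemma filter_card_eq (hcnt : Cnt G D cc aa bb) [DecidableRel G.Adj]
    {p q : V} {j : ℕ} (hj : G.dist p q = j) (hjD : j ≤ D) (i : ℕ) :
    (((Finset.univ.filter (fun r => G.Adj q r)).filter (fun r => G.dist p r = i)).card : ℕ)
      = {z : V | G.Adj q z ∧ G.dist p z = i}.ncard := by
  rw [← Set.ncard_coe_finset]
  congr 1
  ext r
  simp [Finset.mem_filter]

lemma MmulA (hconn : G.Connected) (hcnt : Cnt G D cc aa bb) (hdle : ∀ x y : V, G.dist x y ≤ D)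
    (exD : ∃ u v : V, G.dist u v = D)
    (hbbf : ∀ i : ℕ, i ≤ D - 1 → (bb i : ℝ) = (gauss b D - gauss b i) * (β - α * gauss b i))
    (hccf : ∀ i : ℕ, 1 ≤ i → i ≤ D → (cc i : ℝ) = gauss b i * (1 + α * gauss b (i - 1)))
    (hb : 2 ≤ b) (hD3 : 3 ≤ D) :
    Mmat G D b α β * dmat G 1 = (-(gauss b D)) • Mmat G D b α β := by
  classical
  ext p q
  rw [Matrix.mul_apply, Matrix.smul_apply, Mmat_apply hdle, smul_eq_mul]
  have hterm : ∀ r, Mmat G D b α β p r * dmat G 1 r q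
      = useq b α β (G.dist p r) * (if G.dist r q = 1 then (1:ℝ) else 0) := by
    intro r
    rw [Mmat_apply hdle, dmat_apply]
  simp only [hterm]
  rw [sum_over_nbrs]
  set F := Finset.univ.filter (fun r => G.Adj q r) with hF
  set j := G.dist p q with hj
  have hjD : j ≤ D := hdle p q
  rcases Nat.eq_zero_or_pos j with hj0 | hjpos
  · -- p = q
    have hpq : p = q := hconn.dist_eq_zero_iff.mp hj0
    have hsum : ∑ r ∈ F, useq b α β (G.dist p r) = ∑ r ∈ F, useq b α β 1 := by
      apply Finset.sum_congr rfl
      intro r hr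
      rw [Finset.mem_filter] at hr
      rw [hpq, dist_eq_one_iff_adj.mpr hr.2]
    rw [hsum, Finset.sum_const, nsmul_eq_mul]
    have hcard : (F.card : ℕ) = bb 0 := by
      rw [← Set.ncard_coe_finset]
      rw [← deg_eq hcnt q]
      congr 1
      ext r; simp [hF]
    have hβ : (0:ℝ) < β := beta_pos hconn hcnt exD hbbf hb hD3
    rw [hcard, hj0, useq_zero, useq_one, k_eq hbbf hD3]
    field_simp
  · -- j ≥ 1 : split neighbours by distance to p
    obtain ⟨n, hn⟩ : ∃ n, j = n + 1 := ⟨j - 1, by omega⟩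
    have hsplit : F = ((F.filter (fun r => G.dist p r = j - 1)) ∪
        (F.filter (fun r => G.dist p r = j))) ∪ (F.filter (fun r => G.dist p r = j + 1)) := by
      ext r
      constructor
      · intro hr
        have hr' : G.Adj q r := (Finset.mem_filter.mp hr).2
        obtain ⟨b1, b2⟩ := nbr_dist_le hconn (u := p) hr'
        rw [← hj] at b1 b2
        rcases Nat.lt_trichotomy (G.dist p r) j with hlt | heq | hgt
        · exact Finset.mem_union.mpr (Or.inl (Finset.mem_union.mpr (Or.inl
            (Finset.mem_filter.mpr ⟨hr, by omega⟩))))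
        · exact Finset.mem_union.mpr (Or.inl (Finset.mem_union.mpr (Or.inr
            (Finset.mem_filter.mpr ⟨hr, heq⟩))))
        · exact Finset.mem_union.mpr (Or.inr (Finset.mem_filter.mpr ⟨hr, by omega⟩))
      · intro hr
        rcases Finset.mem_union.mp hr with h | h
        · rcases Finset.mem_union.mp h with h' | h' <;> exact (Finset.mem_filter.mp h').1
        · exact (Finset.mem_filter.mp h).1
    have hd1 : Disjoint ((F.filter (fun r => G.dist p r = j - 1)) ∪
        (F.filter (fun r => G.dist p r = j))) (F.filter (fun r => G.dist p r = j + 1)) := by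
      rw [Finset.disjoint_left]
      intro r hr hr'
      simp only [Finset.mem_union, Finset.mem_filter] at hr hr'
      rcases hr with ⟨_, h⟩ | ⟨_, h⟩ <;> omega
    have hd2 : Disjoint (F.filter (fun r => G.dist p r = j - 1))
        (F.filter (fun r => G.dist p r = j)) := by
      rw [Finset.disjoint_left]
      intro r hr hr'
      simp only [Finset.mem_filter] at hr hr'
      omega
    have hconst : ∀ (i : ℕ), ∑ r ∈ F.filter (fun r => G.dist p r = i),
        useq b α β (G.dist p r) = ((F.filter (fun r => G.dist p r = i)).card : ℝ) * useq b α β i := by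
      intro i
      rw [Finset.sum_congr rfl (fun r hr => by
        rw [(Finset.mem_filter.mp hr).2]), Finset.sum_const, nsmul_eq_mul]
    rw [hsplit, Finset.sum_union hd1, Finset.sum_union hd2, hconst, hconst, hconst]
    have e1 : ((F.filter (fun r => G.dist p r = j - 1)).card : ℕ) = cc j :=
      (filter_card_eq hcnt hj.symm hjD (j-1)).trans (hcnt j hjD p q hj.symm).1
    have e2 : ((F.filter (fun r => G.dist p r = j)).card : ℕ) = aa j :=
      (filter_card_eq hcnt hj.symm hjD j).trans (hcnt j hjD p q hj.symm).2.1
    have e3 : ((F.filter (fun r => G.dist p r = j + 1)).card : ℕ) = bb j :=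
      (filter_card_eq hcnt hj.symm hjD (j+1)).trans (hcnt j hjD p q hj.symm).2.2
    rw [e1, e2, e3]
    have := urec hconn hcnt hdle exD hbbf hccf hb hD3 j (by omega) hjD
    linarith [this]

lemma dmat_mul (hconn : G.Connected) (hcnt : Cnt G D cc aa bb) (hdle : ∀ x y : V, G.dist x y ≤ D)
    {i : ℕ} (hi1 : 1 ≤ i) (hiD : i + 1 ≤ D) :
    dmat G i * dmat G 1 = ((cc (i+1) : ℝ)) • dmat G (i+1) + ((aa i : ℝ)) • dmat G i
      + ((bb (i-1) : ℝ)) • dmat G (i-1) := by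
  classical
  ext p q
  set j := G.dist p q with hj
  have hjD : j ≤ D := hdle p q
  have hterm : ∀ r, dmat G i p r * dmat G 1 r q
      = if (G.Adj q r ∧ G.dist p r = i) then (1:ℝ) else 0 := by
    intro r
    rw [dmat_apply, dmat_apply]
    by_cases h1 : G.dist p r = i
    · by_cases h2 : G.Adj q r
      · rw [if_pos h1, if_pos (dist_eq_one_iff_adj.mpr h2.symm), if_pos ⟨h2, h1⟩, mul_one]
      · rw [if_pos h1, if_neg (fun hd => h2 (dist_eq_one_iff_adj.mp hd).symm),
          if_neg (fun hh => h2 hh.1), mul_zero]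
    · rw [if_neg h1, zero_mul, if_neg (fun hh : G.Adj q r ∧ G.dist p r = i => h1 hh.2)]
  rw [Matrix.mul_apply]
  simp only [hterm]
  rw [Finset.sum_boole]
  have hcard : (Finset.univ.filter (fun r => G.Adj q r ∧ G.dist p r = i)).card
      = {z : V | G.Adj q z ∧ G.dist p z = i}.ncard := by
    rw [← Set.ncard_coe_finset]
    congr 1
    ext r
    simp
  have hRHS : (((cc (i+1) : ℝ)) • dmat G (i+1) + ((aa i : ℝ)) • dmat G i
      + ((bb (i-1) : ℝ)) • dmat G (i-1)) p q
      = (cc (i+1) : ℝ) * (if j = i+1 then 1 else 0) + (aa i : ℝ) * (if j = i then 1 else 0)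
        + (bb (i-1) : ℝ) * (if j = i-1 then 1 else 0) := by
    simp only [Matrix.add_apply, Matrix.smul_apply, dmat_apply, ← hj, smul_eq_mul]
  rw [hRHS, hcard]
  by_cases h1 : j = i + 1
  · have hv := (hcnt (i+1) hiD p q (by omega)).1
    simp only [Nat.add_sub_cancel] at hv
    rw [hv, if_pos h1, if_neg (by omega), if_neg (by omega)]
    ring
  · by_cases h2 : j = i
    · have hv := (hcnt i (by omega) p q (by omega)).2.1
      rw [hv, if_neg h1, if_pos h2, if_neg (by omega)]
      ring
    · by_cases h3 : j = i - 1
      · have hii : i - 1 + 1 = i := by omega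
        have hv := (hcnt (i-1) (by omega) p q (by omega)).2.2
        rw [hii] at hv
        rw [hv, if_neg h1, if_neg h2, if_pos h3]
        ring
      · have hempty : {z : V | G.Adj q z ∧ G.dist p z = i} = ∅ := by
          ext r
          simp only [Set.mem_setOf_eq, Set.mem_empty_iff_false, iff_false, not_and]
          intro hadj hdist
          obtain ⟨b1, b2⟩ := nbr_dist_le hconn (u := p) hadj
          omega
        rw [hempty, Set.ncard_empty, if_neg h1, if_neg h2, if_neg h3]
        norm_num

lemma mrec (hconn : G.Connected) (hcnt : Cnt G D cc aa bb) (hdle : ∀ x y : V, G.dist x y ≤ D)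
    (exD : ∃ u v : V, G.dist u v = D)
    (hbbf : ∀ i : ℕ, i ≤ D - 1 → (bb i : ℝ) = (gauss b D - gauss b i) * (β - α * gauss b i))
    (hccf : ∀ i : ℕ, 1 ≤ i → i ≤ D → (cc i : ℝ) = gauss b i * (1 + α * gauss b (i - 1)))
    (hb : 2 ≤ b) (hD3 : 3 ≤ D) :
    ∀ i, ∃ w : ℝ, i ≤ D → Mmat G D b α β * dmat G i = w • Mmat G D b α β := by
  intro i
  induction i using Nat.twoStepInduction with
  | zero =>
    refine ⟨1, fun _ => ?_⟩
    classical
    rw [dmat_zero hconn, Matrix.mul_one, one_smul]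
  | one =>
    exact ⟨-(gauss b D), fun _ => MmulA hconn hcnt hdle exD hbbf hccf hb hD3⟩
  | more n ih1 ih2 =>
    obtain ⟨w1, hw1⟩ := ih1
    obtain ⟨w2, hw2⟩ := ih2
    by_cases hn2 : n + 2 ≤ D
    · refine ⟨(w2 * (-(gauss b D)) - (aa (n+1) : ℝ) * w2 - (bb n : ℝ) * w1) / (cc (n+2) : ℝ),
        fun _ => ?_⟩
      have hw1' := hw1 (by omega)
      have hw2' := hw2 (by omega)
      have hMI := dmat_mul hconn hcnt hdle (i := n+1) (by omega) (by omega)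
      simp only [Nat.add_sub_cancel] at hMI
      have hcpos : (0:ℝ) < (cc (n+2) : ℝ) := by
        obtain ⟨u, v, huv⟩ := realized hconn exD (n+2) (by omega)
        exact_mod_cast cc_ge_one hconn hcnt (by omega) (by omega) huv
      have hc : (cc (n+2) : ℝ) ≠ 0 := hcpos.ne'
      have h1 : Mmat G D b α β * (dmat G (n+1) * dmat G 1)
          = (w2 * (-(gauss b D))) • Mmat G D b α β := by
        rw [← Matrix.mul_assoc, hw2', Matrix.smul_mul,
          MmulA hconn hcnt hdle exD hbbf hccf hb hD3, smul_smul]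
      rw [hMI, Matrix.mul_add, Matrix.mul_add, Matrix.mul_smul, Matrix.mul_smul,
        Matrix.mul_smul, hw1', hw2', smul_smul, smul_smul] at h1
      have h2 : ((cc (n+2) : ℝ)) • (Mmat G D b α β * dmat G (n+2))
          = (w2 * (-(gauss b D)) - (aa (n+1) : ℝ) * w2 - (bb n : ℝ) * w1) • Mmat G D b α β := by
        have h3 := eq_sub_of_add_eq h1
        have h4 := eq_sub_of_add_eq h3
        rw [h4, ← sub_smul, ← sub_smul]
        congr 1
        ring
      calc Mmat G D b α β * dmat G (n+2)
          = ((cc (n+2) : ℝ))⁻¹ • (((cc (n+2) : ℝ)) • (Mmat G D b α β * dmat G (n+2))) :=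
            (inv_smul_smul₀ hc _).symm
        _ = ((cc (n+2) : ℝ))⁻¹ •
            ((w2 * (-(gauss b D)) - (aa (n+1) : ℝ) * w2 - (bb n : ℝ) * w1) • Mmat G D b α β) := by
            rw [h2]
        _ = ((w2 * (-(gauss b D)) - (aa (n+1) : ℝ) * w2 - (bb n : ℝ) * w1) / (cc (n+2) : ℝ)) •
            Mmat G D b α β := by
            rw [smul_smul]
            congr 1
            ring
    · exact ⟨0, fun h => absurd h hn2⟩

lemma msq (hconn : G.Connected) (hcnt : Cnt G D cc aa bb) (hdle : ∀ x y : V, G.dist x y ≤ D)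
    (exD : ∃ u v : V, G.dist u v = D)
    (hbbf : ∀ i : ℕ, i ≤ D - 1 → (bb i : ℝ) = (gauss b D - gauss b i) * (β - α * gauss b i))
    (hccf : ∀ i : ℕ, 1 ≤ i → i ≤ D → (cc i : ℝ) = gauss b i * (1 + α * gauss b (i - 1)))
    (hb : 2 ≤ b) (hD3 : 3 ≤ D) :
    ∃ q : ℝ, 1 ≤ q ∧ Mmat G D b α β * Mmat G D b α β = q • Mmat G D b α β := by
  classical
  choose w hw using mrec hconn hcnt hdle exD hbbf hccf hb hD3
  refine ⟨∑ i ∈ Finset.range (D+1), useq b α β i * w i, ?_, ?_⟩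
  swap
  · -- M * M = q • M
    conv_lhs => rw [show Mmat G D b α β * Mmat G D b α β
      = Mmat G D b α β * (∑ i ∈ Finset.range (D+1), useq b α β i • dmat G i) from rfl]
    rw [Finset.mul_sum]
    rw [Finset.sum_congr rfl (fun i hi => by
      rw [Matrix.mul_smul, hw i (by have := Finset.mem_range.mp hi; omega), smul_smul])]
    rw [← Finset.sum_smul]
  · -- q ≥ 1 via traces
    have hone : ∀ p : V, Mmat G D b α β p p = 1 := by
      intro p
      rw [Mmat_apply hdle, dist_self, useq_zero]
    have htr : (Mmat G D b α β).trace = (Fintype.card V : ℝ) := by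
      rw [Matrix.trace]
      simp only [Matrix.diag]
      rw [Finset.sum_congr rfl (fun p _ => hone p), Finset.sum_const, nsmul_eq_mul, mul_one]
      simp [Finset.card_univ]
    have hMM : Mmat G D b α β * Mmat G D b α β
        = (∑ i ∈ Finset.range (D+1), useq b α β i * w i) • Mmat G D b α β := by
      conv_lhs => rw [show Mmat G D b α β * Mmat G D b α β
        = Mmat G D b α β * (∑ i ∈ Finset.range (D+1), useq b α β i • dmat G i) from rfl]
      rw [Finset.mul_sum]
      rw [Finset.sum_congr rfl (fun i hi => by
        rw [Matrix.mul_smul, hw i (by have := Finset.mem_range.mp hi; omega), smul_smul])]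
      rw [← Finset.sum_smul]
    have htr2 : (Mmat G D b α β * Mmat G D b α β).trace
        = (∑ i ∈ Finset.range (D+1), useq b α β i * w i) * (Fintype.card V : ℝ) := by
      rw [hMM, Matrix.trace_smul, htr, smul_eq_mul]
    have htr3 : (Fintype.card V : ℝ) ≤ (Mmat G D b α β * Mmat G D b α β).trace := by
      rw [Matrix.trace]
      simp only [Matrix.diag]
      have hterm : ∀ p : V, (1:ℝ) ≤ (Mmat G D b α β * Mmat G D b α β) p p := by
        intro p
        rw [Matrix.mul_apply]
        have hsq : ∀ q : V, Mmat G D b α β p q * Mmat G D b α β q p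
            = (Mmat G D b α β p q)^2 := by
          intro q
          rw [← Mmat_symm hdle p q]
          ring
        simp only [hsq]
        calc (1:ℝ) = (Mmat G D b α β p p)^2 := by rw [hone p]; norm_num
          _ ≤ ∑ q : V, (Mmat G D b α β p q)^2 :=
            Finset.single_le_sum (f := fun q => (Mmat G D b α β p q)^2)
              (fun q _ => sq_nonneg _) (Finset.mem_univ p)
      calc (Fintype.card V : ℝ) = ∑ _p : V, (1:ℝ) := by
            rw [Finset.sum_const, nsmul_eq_mul, mul_one]; simp [Finset.card_univ]
        _ ≤ ∑ p : V, (Mmat G D b α β * Mmat G D b α β) p p :=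
            Finset.sum_le_sum (fun p _ => hterm p)
    have hcard : (0:ℝ) < (Fintype.card V : ℝ) := by
      obtain ⟨u, v, _⟩ := exD
      have : 0 < Fintype.card V := Fintype.card_pos_iff.mpr ⟨u⟩
      exact_mod_cast this
    rw [htr2] at htr3
    nlinarith

lemma mpsd (hdle : ∀ x y : V, G.dist x y ≤ D) {q : ℝ} (hq1 : 1 ≤ q)
    (hq : Mmat G D b α β * Mmat G D b α β = q • Mmat G D b α β)
    {χ : V → ℝ} (h0 : χ ⬝ᵥ (Mmat G D b α β *ᵥ χ) = 0) :
    Mmat G D b α β *ᵥ χ = 0 := by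
  have hsym : (Mmat G D b α β)ᵀ = Mmat G D b α β := by
    ext p q
    rw [Matrix.transpose_apply]
    exact (Mmat_symm hdle p q).symm
  have key : q * (χ ⬝ᵥ (Mmat G D b α β *ᵥ χ))
      = (Mmat G D b α β *ᵥ χ) ⬝ᵥ (Mmat G D b α β *ᵥ χ) := by
    calc q * (χ ⬝ᵥ (Mmat G D b α β *ᵥ χ))
        = χ ⬝ᵥ (q • (Mmat G D b α β *ᵥ χ)) := by rw [dotProduct_smul]; rfl
      _ = χ ⬝ᵥ ((q • Mmat G D b α β) *ᵥ χ) := by rw [Matrix.smul_mulVec]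
      _ = χ ⬝ᵥ ((Mmat G D b α β * Mmat G D b α β) *ᵥ χ) := by rw [hq]
      _ = χ ⬝ᵥ (Mmat G D b α β *ᵥ (Mmat G D b α β *ᵥ χ)) := by rw [Matrix.mulVec_mulVec]
      _ = (χ ᵥ* Mmat G D b α β) ⬝ᵥ (Mmat G D b α β *ᵥ χ) :=
          Matrix.dotProduct_mulVec _ _ _
      _ = (Mmat G D b α β *ᵥ χ) ⬝ᵥ (Mmat G D b α β *ᵥ χ) := by
          nth_rewrite 1 [← hsym]
          rw [Matrix.vecMul_transpose]
  rw [h0, mul_zero] at key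
  funext v
  have hsum : ∑ r : V, ((Mmat G D b α β *ᵥ χ) r) * ((Mmat G D b α β *ᵥ χ) r) = 0 := key.symm
  have hterm := (Finset.sum_eq_zero_iff_of_nonneg
    (fun r _ => mul_self_nonneg ((Mmat G D b α β *ᵥ χ) r))).mp hsum v (Finset.mem_univ v)
  simpa [mul_self_eq_zero] using hterm

/-! ### chunk 6: the psi-regularity lemma -/

lemma psi (hconn : G.Connected) (hcnt : Cnt G D cc aa bb) (hdle : ∀ x y : V, G.dist x y ≤ D)
    (exD : ∃ u v : V, G.dist u v = D)
    (hbbf : ∀ i : ℕ, i ≤ D - 1 → (bb i : ℝ) = (gauss b D - gauss b i) * (β - α * gauss b i))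
    (hccf : ∀ i : ℕ, 1 ≤ i → i ≤ D → (cc i : ℝ) = gauss b i * (1 + α * gauss b (i - 1)))
    (hb : 2 ≤ b) (hD3 : 3 ≤ D)
    {C : Set V} (hclq : G.IsClique C) (hCcard : (C.ncard : ℝ) = β + 1)
    {w : V} (hw : w ∉ C) {z0 : V} (hz0 : z0 ∈ C) (hz0w : G.Adj w z0) :
    ({p ∈ C | G.Adj w p}.ncard : ℝ) = α + 1 := by
  classical
  have hβ : (0:ℝ) < β := beta_pos hconn hcnt exD hbbf hb hD3
  have hβα : (0:ℝ) < β - α := by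
    have := beta_sub_pos hconn hcnt exD hbbf hb hD3 1 (by omega)
    rwa [gauss_one, mul_one] at this
  obtain ⟨qv, hqv1, hqv⟩ := msq hconn hcnt hdle exD hbbf hccf hb hD3
  set CF := (Set.toFinite C).toFinset with hCF
  have hmemCF : ∀ r, r ∈ CF ↔ r ∈ C := fun r => Set.Finite.mem_toFinset _
  set χ : V → ℝ := fun v => if v ∈ CF then (1:ℝ) else 0 with hχ
  have hcard : (CF.card : ℝ) = β + 1 := by
    rw [← Set.ncard_eq_toFinset_card C (Set.toFinite C)]
    exact hCcard
  have hMv : ∀ v : V, (Mmat G D b α β *ᵥ χ) v = ∑ r ∈ CF, useq b α β (G.dist v r) := by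
    intro v
    have hterm : ∀ r, Mmat G D b α β v r * χ r
        = if r ∈ CF then useq b α β (G.dist v r) else 0 := by
      intro r
      by_cases hr : r ∈ CF
      · simp [hχ, hr, Mmat_apply hdle]
      · simp [hχ, hr]
    simp only [Matrix.mulVec, dotProduct, hterm]
    rw [Finset.sum_ite_mem, Finset.univ_inter]
  have hquad : χ ⬝ᵥ (Mmat G D b α β *ᵥ χ) = ∑ p ∈ CF, ∑ r ∈ CF, useq b α β (G.dist p r) := by
    have hterm : ∀ p, χ p * (Mmat G D b α β *ᵥ χ) p
        = if p ∈ CF then (∑ r ∈ CF, useq b α β (G.dist p r)) else 0 := by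
      intro p
      by_cases hp : p ∈ CF
      · rw [hMv]; simp [hχ, hp]
      · simp [hχ, hp]
    rw [dotProduct]
    simp only [hterm]
    rw [Finset.sum_ite_mem, Finset.univ_inter]
  have hinner : ∀ p ∈ CF, ∑ r ∈ CF, useq b α β (G.dist p r)
      = 1 + ((CF.card : ℝ) - 1) * useq b α β 1 := by
    intro p hp
    have hconst : ∀ r ∈ CF.erase p, useq b α β (G.dist p r) = useq b α β 1 := by
      intro r hr
      have hrp : r ≠ p := (Finset.mem_erase.mp hr).1
      have hrC : r ∈ C := (hmemCF r).mp (Finset.mem_erase.mp hr).2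
      have hpC : p ∈ C := (hmemCF p).mp hp
      have hadj : G.Adj p r := hclq hpC hrC (Ne.symm hrp)
      rw [dist_eq_one_iff_adj.mpr hadj]
    rw [← Finset.add_sum_erase CF _ hp, SimpleGraph.dist_self, useq_zero]
    congr 1
    rw [Finset.sum_congr rfl hconst, Finset.sum_const, nsmul_eq_mul,
      Finset.card_erase_of_mem hp]
    have h1 : 1 ≤ CF.card := Finset.card_pos.mpr ⟨p, hp⟩
    rw [Nat.cast_sub h1]
    norm_num
  have hquad0 : χ ⬝ᵥ (Mmat G D b α β *ᵥ χ) = 0 := by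
    rw [hquad, Finset.sum_congr rfl hinner, Finset.sum_const, nsmul_eq_mul, useq_one, hcard]
    field_simp
    ring
  have hzero := mpsd hdle hqv1 hqv hquad0
  have hvw : ∑ r ∈ CF, useq b α β (G.dist w r) = 0 := by
    rw [← hMv w, hzero]
    rfl
  -- split the sum over CF by adjacency to w
  rw [← Finset.sum_filter_add_sum_filter_not CF (fun r => G.Adj w r)] at hvw
  have hA : ∑ r ∈ CF.filter (fun r => G.Adj w r), useq b α β (G.dist w r)
      = ((CF.filter (fun r => G.Adj w r)).card : ℝ) * useq b α β 1 := by
    rw [Finset.sum_congr rfl (fun r hr => by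
      rw [dist_eq_one_iff_adj.mpr (Finset.mem_filter.mp hr).2]), Finset.sum_const, nsmul_eq_mul]
  have hB : ∑ r ∈ CF.filter (fun r => ¬ G.Adj w r), useq b α β (G.dist w r)
      = ((CF.filter (fun r => ¬ G.Adj w r)).card : ℝ) * useq b α β 2 := by
    have hconst : ∀ r ∈ CF.filter (fun r => ¬ G.Adj w r),
        useq b α β (G.dist w r) = useq b α β 2 := by
      intro r hr
      obtain ⟨hrCF, hnadj⟩ := Finset.mem_filter.mp hr
      have hrC : r ∈ C := (hmemCF r).mp hrCF
      have hrw : r ≠ w := by rintro rfl; exact hw hrC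
      have hrz0 : r ≠ z0 := by rintro rfl; exact hnadj hz0w
      have hd2 : G.dist w r = 2 := by
        have hub : G.dist w r ≤ 2 := by
          have t1 : G.dist w z0 = 1 := dist_eq_one_iff_adj.mpr hz0w
          have t2 : G.dist z0 r = 1 := dist_eq_one_iff_adj.mpr (hclq hz0 hrC (Ne.symm hrz0))
          have := hconn.dist_triangle (u := w) (v := z0) (w := r)
          omega
        have hne0 : G.dist w r ≠ 0 := fun h => hrw ((hconn.dist_eq_zero_iff).mp h).symm
        have hne1 : G.dist w r ≠ 1 := fun h => hnadj (dist_eq_one_iff_adj.mp h)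
        omega
      rw [hd2]
    rw [Finset.sum_congr rfl hconst, Finset.sum_const, nsmul_eq_mul]
  rw [hA, hB] at hvw
  -- identify the two cardinalities
  have hgoalcard : {p ∈ C | G.Adj w p}.ncard = (CF.filter (fun r => G.Adj w r)).card := by
    rw [← Set.ncard_coe_finset]
    congr 1
    ext r
    simp only [Finset.coe_filter, Set.mem_setOf_eq, hmemCF]
  have hsumcard : (CF.filter (fun r => G.Adj w r)).card
      + (CF.filter (fun r => ¬ G.Adj w r)).card = CF.card :=
    Finset.card_filter_add_card_filter_not (fun r => G.Adj w r)
  set f : ℝ := ((CF.filter (fun r => G.Adj w r)).card : ℝ) with hf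
  have hnotcard : ((CF.filter (fun r => ¬ G.Adj w r)).card : ℝ) = (β + 1) - f := by
    have : ((CF.filter (fun r => G.Adj w r)).card : ℝ)
        + ((CF.filter (fun r => ¬ G.Adj w r)).card : ℝ) = (CF.card : ℝ) := by
      exact_mod_cast congrArg (Nat.cast : ℕ → ℝ) hsumcard
    rw [hcard] at this
    linarith
  rw [hnotcard] at hvw
  -- now hvw : f * useq 1 + ((β+1) - f) * useq 2 = 0
  have hu1 : useq b α β 1 = -(1/β) := useq_one
  have hu2 : useq b α β 2 = (1/β) * ((1+α)/(β-α)) := by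
    rw [show (2:ℕ) = 1 + 1 from rfl, useq_succ, useq_one, gauss_one]
    ring
  rw [hu1, hu2] at hvw
  have hne1 : β ≠ 0 := hβ.ne'
  have hne2 : β - α ≠ 0 := hβα.ne'
  field_simp at hvw
  have hprod : β * (β + 1) * ((α + 1) - f) = 0 := by linear_combination β * hvw
  have hpos : (0:ℝ) < β * (β + 1) := by nlinarith
  have hfin : f = α + 1 := by
    rcases mul_eq_zero.mp hprod with h | h
    · exact absurd h hpos.ne'
    · linarith
  rw [hgoalcard]
  exact hfin

/-! ### chunk 7: PLS lemmas and the endgame -/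

lemma line_clique {ℓ : Set V} (hℓ : ℓ ∈ plsLines G γ) : G.IsClique ℓ := hℓ.1.1

lemma line_unique (hpls : IsPointGraphOf G (plsLines G γ)) {u v : V} (huv : u ≠ v)
    {L L' : Set V} (hL : L ∈ plsLines G γ) (hL' : L' ∈ plsLines G γ)
    (huL : u ∈ L) (hvL : v ∈ L) (huL' : u ∈ L') (hvL' : v ∈ L') : L = L' := by
  have hadj : G.Adj u v := (line_clique hL) huL hvL huv
  obtain ⟨ℓ0, -, huniq⟩ := hpls u v hadj
  rw [huniq L ⟨hL, huL, hvL⟩, huniq L' ⟨hL', huL', hvL'⟩]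

lemma lines_count (hconn : G.Connected) (hcnt : Cnt G D cc aa bb)
    (hdle : ∀ x y : V, G.dist x y ≤ D) (exD : ∃ u v : V, G.dist u v = D)
    (hbbf : ∀ i : ℕ, i ≤ D - 1 → (bb i : ℝ) = (gauss b D - gauss b i) * (β - α * gauss b i))
    (hccf : ∀ i : ℕ, 1 ≤ i → i ≤ D → (cc i : ℝ) = gauss b i * (1 + α * gauss b (i - 1)))
    (hb : 2 ≤ b) (hD3 : 3 ≤ D)
    (hpls : IsPointGraphOf G (plsLines G γ))
    {x : V} (hDx : IsDelsarteVertex (plsLines G γ) β x)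
    {w : V} (hw2 : G.dist x w = 2) :
    ({L : Set V | (L ∈ plsLines G γ ∧ x ∈ L) ∧ ∃ p ∈ L, G.Adj w p}.ncard : ℝ) = b + 1 := by
  classical
  have hxw : x ≠ w := by
    intro h
    rw [h, dist_self] at hw2
    omega
  have hnadj : ¬ G.Adj x w := by
    intro h
    rw [dist_eq_one_iff_adj.mpr h] at hw2
    omega
  set 𝒜 : Set (Set V) := {L : Set V | (L ∈ plsLines G γ ∧ x ∈ L) ∧ ∃ p ∈ L, G.Adj w p}
    with h𝒜
  have hwnotin : ∀ L ∈ 𝒜, w ∉ L := by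
    intro L hL hwL
    rcases eq_or_ne w x with rfl | hne
    · exact hxw rfl
    · exact hnadj ((line_clique hL.1.1) hL.1.2 hwL (Ne.symm hne))
  have hSL : ∀ L ∈ 𝒜, ({p ∈ L | G.Adj w p}.ncard : ℝ) = α + 1 := by
    intro L hL
    obtain ⟨⟨hLmem, hxL⟩, z0, hz0L, hz0w⟩ := hL
    exact psi hconn hcnt hdle exD hbbf hccf hb hD3 (line_clique hLmem)
      (hDx L hLmem hxL) (hwnotin L ⟨⟨hLmem, hxL⟩, z0, hz0L, hz0w⟩) hz0L hz0w
  -- the common neighbours of x and w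
  have hμ : {z : V | G.Adj w z ∧ G.dist x z = 1}.ncard = cc 2 := by
    have := (hcnt 2 (by omega) x w hw2).1
    simpa using this
  set AF : Finset (Set V) := (Set.toFinite 𝒜).toFinset with hAF
  have hmemAF : ∀ L, L ∈ AF ↔ L ∈ 𝒜 := fun L => Set.Finite.mem_toFinset _
  set μF : Finset V := (Set.toFinite {z : V | G.Adj w z ∧ G.dist x z = 1}).toFinset with hμF
  have hmemμF : ∀ z, z ∈ μF ↔ G.Adj w z ∧ G.dist x z = 1 := fun z =>
    Set.Finite.mem_toFinset _
  have hbiUnion : μF = AF.biUnion (fun L => (Set.toFinite {p ∈ L | G.Adj w p}).toFinset) := by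
    ext z
    rw [Finset.mem_biUnion]
    constructor
    · intro hz
      obtain ⟨hwz, hdz⟩ := (hmemμF z).mp hz
      have hxz : G.Adj x z := dist_eq_one_iff_adj.mp hdz
      obtain ⟨L, ⟨hLmem, hxL, hzL⟩, -⟩ := hpls x z hxz
      refine ⟨L, (hmemAF L).mpr ⟨⟨hLmem, hxL⟩, z, hzL, hwz⟩, ?_⟩
      rw [Set.Finite.mem_toFinset]
      exact ⟨hzL, hwz⟩
    · rintro ⟨L, hLAF, hzL⟩
      rw [Set.Finite.mem_toFinset] at hzL
      obtain ⟨hzL, hwz⟩ := hzL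
      obtain ⟨⟨hLmem, hxL⟩, -⟩ := (hmemAF L).mp hLAF
      have hzx : z ≠ x := by
        rintro rfl
        exact hnadj hwz.symm
      have hxz : G.Adj x z := (line_clique hLmem) hxL hzL (Ne.symm hzx)
      exact (hmemμF z).mpr ⟨hwz, dist_eq_one_iff_adj.mpr hxz⟩
  have hdisj : ∀ L ∈ AF, ∀ L' ∈ AF, L ≠ L' →
      Disjoint ((Set.toFinite {p ∈ L | G.Adj w p}).toFinset)
        ((Set.toFinite {p ∈ L' | G.Adj w p}).toFinset) := by
    intro L hL L' hL' hne
    rw [Finset.disjoint_left]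
    intro z hz hz'
    rw [Set.Finite.mem_toFinset] at hz hz'
    obtain ⟨⟨hLmem, hxL⟩, -⟩ := (hmemAF L).mp hL
    obtain ⟨⟨hLmem', hxL'⟩, -⟩ := (hmemAF L').mp hL'
    have hzx : z ≠ x := by
      rintro rfl
      exact hnadj hz.2.symm
    exact hne (line_unique hpls (Ne.symm hzx) hLmem hLmem' hxL hz.1 hxL' hz'.1)
  have hcardsum : (μF.card : ℝ) = (AF.card : ℝ) * (α + 1) := by
    rw [hbiUnion, Finset.card_biUnion hdisj]
    push_cast
    rw [Finset.sum_congr rfl (fun L hL => ?_), Finset.sum_const, nsmul_eq_mul]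
    rw [← Set.ncard_eq_toFinset_card _ (Set.toFinite _)]
    exact hSL L ((hmemAF L).mp hL)
  have hμcard : (μF.card : ℝ) = (cc 2 : ℝ) := by
    rw [← Set.ncard_eq_toFinset_card _ (Set.toFinite _)]
    exact_mod_cast congrArg (Nat.cast : ℕ → ℝ) hμ
  have hcc2 : (cc 2 : ℝ) = (1 + (b:ℝ)) * (1 + α) := by
    have := hccf 2 (by omega) (by omega)
    rw [gauss_two] at this
    simpa [gauss_one] using this
  have h1α : (0:ℝ) < 1 + α := by
    have := one_add_pos hconn hcnt exD hccf hb 1 (by omega)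
    rwa [gauss_one, mul_one] at this
  have hAcard : (AF.card : ℝ) = (b : ℝ) + 1 := by
    have heq : (AF.card : ℝ) * (α + 1) = ((b:ℝ) + 1) * (α + 1) := by
      rw [← hcardsum, hμcard, hcc2]
      ring
    exact mul_right_cancel₀ (by linarith) heq
  rw [← hAcard, ← Set.ncard_eq_toFinset_card _ (Set.toFinite _)]

lemma alpha_le_b_aux (hconn : G.Connected) (hcnt : Cnt G D cc aa bb)
    (hdle : ∀ x y : V, G.dist x y ≤ D) (exD : ∃ u v : V, G.dist u v = D)
    (hbbf : ∀ i : ℕ, i ≤ D - 1 → (bb i : ℝ) = (gauss b D - gauss b i) * (β - α * gauss b i))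
    (hccf : ∀ i : ℕ, 1 ≤ i → i ≤ D → (cc i : ℝ) = gauss b i * (1 + α * gauss b (i - 1)))
    (hb : 2 ≤ b) (hD3 : 3 ≤ D)
    (hpls : IsPointGraphOf G (plsLines G γ))
    {x : V} (hDx : IsDelsarteVertex (plsLines G γ) β x)
    {M : Set V} (hM : M ∈ plsLines G γ) (hMcard : (M.ncard : ℝ) = β + 1)
    (hxM : x ∉ M) {w : V} (hwM : w ∈ M) (hw2 : G.dist x w = 2)
    {z : V} (hzM : z ∈ M) (hxz : G.Adj x z) :
    α ≤ (b : ℝ) := by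
  classical
  have hnadj : ¬ G.Adj x w := by
    intro h
    rw [dist_eq_one_iff_adj.mpr h] at hw2
    omega
  have hT : ({p ∈ M | G.Adj x p}.ncard : ℝ) = α + 1 :=
    psi hconn hcnt hdle exD hbbf hccf hb hD3 (line_clique hM) hMcard hxM hzM hxz
  have hA : ({L : Set V | (L ∈ plsLines G γ ∧ x ∈ L) ∧ ∃ p ∈ L, G.Adj w p}.ncard : ℝ)
      = (b : ℝ) + 1 :=
    lines_count hconn hcnt hdle exD hbbf hccf hb hD3 hpls hDx hw2
  -- inject the points of M adjacent to x into the lines through x meeting N(w)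
  set f : V → Set V := fun u => if h : G.Adj x u then (hpls x u h).choose else ∅ with hfdef
  have hfspec : ∀ u, (h : G.Adj x u) →
      f u ∈ plsLines G γ ∧ x ∈ f u ∧ u ∈ f u := by
    intro u h
    have := (hpls x u h).choose_spec.1
    simp only [hfdef, dif_pos h]
    exact this
  have hmap : ∀ u ∈ {p ∈ M | G.Adj x p},
      f u ∈ {L : Set V | (L ∈ plsLines G γ ∧ x ∈ L) ∧ ∃ p ∈ L, G.Adj w p} := by
    rintro u ⟨huM, hxu⟩
    obtain ⟨h1, h2, h3⟩ := hfspec u hxu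
    have huw : u ≠ w := by
      rintro rfl
      exact hnadj hxu
    have hwu : G.Adj w u := ((line_clique hM) huM hwM huw).symm
    exact ⟨⟨h1, h2⟩, u, h3, hwu⟩
  have hinj : Set.InjOn f {p ∈ M | G.Adj x p} := by
    rintro u ⟨huM, hxu⟩ u' ⟨huM', hxu'⟩ hff
    by_contra hne
    obtain ⟨h1, h2, h3⟩ := hfspec u hxu
    obtain ⟨h1', h2', h3'⟩ := hfspec u' hxu'
    rw [hff] at h3
    have : f u' = M := line_unique hpls hne h1' hM h3 h3' huM huM'
    rw [← this] at hxM
    exact hxM h2'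
  have hle := Set.ncard_le_ncard_of_injOn f hmap hinj (Set.toFinite _)
  have hle' : ((({p ∈ M | G.Adj x p}).ncard : ℕ) : ℝ)
      ≤ (({L : Set V | (L ∈ plsLines G γ ∧ x ∈ L) ∧ ∃ p ∈ L, G.Adj w p}).ncard : ℝ) := by
    exact_mod_cast hle
  rw [hT, hA] at hle'
  linarith

lemma alpha_nat (hconn : G.Connected) (hcnt : Cnt G D cc aa bb)
    (hdle : ∀ x y : V, G.dist x y ≤ D) (exD : ∃ u v : V, G.dist u v = D)
    (hbbf : ∀ i : ℕ, i ≤ D - 1 → (bb i : ℝ) = (gauss b D - gauss b i) * (β - α * gauss b i))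
    (hccf : ∀ i : ℕ, 1 ≤ i → i ≤ D → (cc i : ℝ) = gauss b i * (1 + α * gauss b (i - 1)))
    (hb : 2 ≤ b) (hD3 : 3 ≤ D)
    (hpls : IsPointGraphOf G (plsLines G γ))
    {x : V} (hDx : IsDelsarteVertex (plsLines G γ) β x) :
    ∃ n : ℕ, α = n := by
  classical
  obtain ⟨u, v, huv⟩ := id exD
  have h2or : 2 ≤ G.dist x u ∨ 2 ≤ G.dist x v := by
    by_contra hcon
    push_neg at hcon
    have htri := hconn.dist_triangle (u := u) (v := x) (w := v)
    have hco : G.dist u x = G.dist x u := dist_comm ..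
    omega
  have hex2 : ∃ w, G.dist x w = 2 := by
    rcases h2or with h | h
    · exact dist_down hconn (G.dist x u) x u rfl 2 h
    · exact dist_down hconn (G.dist x v) x v rfl 2 h
  obtain ⟨w, hw2⟩ := hex2
  obtain ⟨z, hzw, hz1⟩ := exists_prev hconn (show G.dist x w = 1 + 1 from hw2)
  have hxz : G.Adj x z := dist_eq_one_iff_adj.mp hz1
  obtain ⟨C, ⟨hCmem, hxC, hzC⟩, -⟩ := hpls x z hxz
  have hCcard := hDx C hCmem hxC
  have hxw : x ≠ w := by
    intro h
    rw [h, dist_self] at hw2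
    omega
  have hnadj : ¬ G.Adj x w := by
    intro h
    rw [dist_eq_one_iff_adj.mpr h] at hw2
    omega
  have hwC : w ∉ C := fun hwC => hnadj ((line_clique hCmem) hxC hwC hxw)
  have hpsi := psi hconn hcnt hdle exD hbbf hccf hb hD3 (line_clique hCmem) hCcard hwC hzC
    hzw.symm
  have hF1 : 1 ≤ {p ∈ C | G.Adj w p}.ncard :=
    Set.ncard_pos (Set.toFinite _) |>.mpr ⟨z, hzC, hzw.symm⟩
  refine ⟨{p ∈ C | G.Adj w p}.ncard - 1, ?_⟩
  have hcast : (({p ∈ C | G.Adj w p}.ncard - 1 : ℕ) : ℝ)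
      = ({p ∈ C | G.Adj w p}.ncard : ℝ) - 1 := by
    rw [Nat.cast_sub hF1, Nat.cast_one]
  rw [hcast, hpsi]
  ring

end Aux

/-- if `Γ` has classical parameters `(D, b, α, β)`, `b ≥ 2`, `D ≥ 3`, the
PLS(γ) property for some `γ ≥ 3`, and contains two distinct Delsarte vertices at distance
at most two, then `α` is a non-negative integer and `α ≤ b`. -/
theorem statement_4 {V : Type*} [Fintype V] (G : SimpleGraph V) (D b : ℕ) (α β : ℝ)
    (cc aa bb : ℕ → ℕ) (hb : 2 ≤ b) (hD : 3 ≤ D)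
    (h : HasClassicalParams G D b α β cc aa bb)
    (γ : ℕ) (hγ : 3 ≤ γ) (hpls : IsPointGraphOf G (plsLines G γ))
    (hdel : ∃ x y : V, x ≠ y ∧ G.dist x y ≤ 2 ∧
      IsDelsarteVertex (plsLines G γ) β x ∧ IsDelsarteVertex (plsLines G γ) β y) :
    (∃ n : ℕ, α = n) ∧ α ≤ (b : ℝ) := by
  classical
  obtain ⟨⟨hconn, hdle, exD, hcnt'⟩, hbbf, hccf⟩ := h
  have hcnt : Cnt G D cc aa bb := hcnt'
  obtain ⟨x, y, hxy, hxy2, hDx, hDy⟩ := hdel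
  obtain ⟨n, hn⟩ := alpha_nat hconn hcnt hdle exD hbbf hccf hb hD hpls hDx
  refine ⟨⟨n, hn⟩, ?_⟩
  have hdist : G.dist x y = 1 ∨ G.dist x y = 2 := by
    have h0 : G.dist x y ≠ 0 := fun hh => hxy (hconn.dist_eq_zero_iff.mp hh)
    omega
  rcases hdist with h1 | h2
  · -- Case d(x,y) = 1
    rcases Nat.eq_zero_or_pos n with rfl | hn1
    · rw [hn]
      norm_num
    · have hα1 : (1:ℝ) ≤ α := by
        rw [hn]
        exact_mod_cast hn1
      have hadj : G.Adj x y := dist_eq_one_iff_adj.mp h1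
      obtain ⟨ℓ, ⟨hℓmem, hxℓ, hyℓ⟩, -⟩ := hpls x y hadj
      have hℓcard := hDx ℓ hℓmem hxℓ
      have hS := (hcnt 1 (by omega) x y h1).2.1
      have hcc1 : (cc 1 : ℝ) = 1 := by
        have h0 := hccf 1 (by omega) (by omega)
        rw [gauss_one] at h0
        simpa [gauss_zero] using h0
      have hbb1 : (bb 1 : ℝ) = (gauss b D - 1) * (β - α) := by
        have h0 := hbbf 1 (by omega)
        rwa [gauss_one, mul_one] at h0
      have haa1 : (aa 1 : ℝ) = β - 1 + α * (gauss b D - 1) := by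
        have h01 := aaR hconn hcnt exD hbbf hD 1 le_rfl (by omega)
        rw [h01, hcc1, hbb1]
        ring
      have hgD : (1:ℝ) < gauss b D := by
        have h0 := gauss_lt (b := b) hb (show 1 < D by omega)
        rwa [gauss_one] at h0
      have hzex : ∃ z, (G.Adj y z ∧ G.dist x z = 1) ∧ z ∉ ℓ := by
        by_contra hcon
        push_neg at hcon
        have hsub : {z | G.Adj y z ∧ G.dist x z = 1} ⊆ ℓ \ {x, y} := by
          rintro z ⟨hyz, hz1⟩
          refine ⟨hcon z ⟨hyz, hz1⟩, ?_⟩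
          simp only [Set.mem_insert_iff, Set.mem_singleton_iff, not_or]
          constructor
          · rintro rfl
            rw [dist_self] at hz1
            omega
          · rintro rfl
            exact G.irrefl hyz
        have hmono := Set.ncard_le_ncard hsub (Set.toFinite _)
        have hsub2 : ({x, y} : Set V) ⊆ ℓ := by
          rw [Set.insert_subset_iff, Set.singleton_subset_iff]
          exact ⟨hxℓ, hyℓ⟩
        have h2le : 2 ≤ ℓ.ncard := by
          have h0 := Set.ncard_le_ncard hsub2 (Set.toFinite _)
          rwa [Set.ncard_pair hxy] at h0
        have hdiff : (ℓ \ {x, y}).ncard = ℓ.ncard - 2 := by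
          rw [Set.ncard_diff hsub2 (Set.toFinite _), Set.ncard_pair hxy]
        rw [hS, hdiff] at hmono
        have hcast : (aa 1 : ℝ) ≤ (ℓ.ncard : ℝ) - 2 := by
          have h0 : ((ℓ.ncard - 2 : ℕ) : ℝ) = (ℓ.ncard : ℝ) - 2 := by
            rw [Nat.cast_sub h2le]
            norm_num
          rw [← h0]
          exact_mod_cast hmono
        rw [haa1, hℓcard] at hcast
        nlinarith
      obtain ⟨z, ⟨hyz, hz1⟩, hzℓ⟩ := hzex
      have hxz : G.Adj x z := dist_eq_one_iff_adj.mp hz1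
      obtain ⟨M, ⟨hMmem, hyM, hzM⟩, -⟩ := hpls y z hyz
      have hMcard := hDy M hMmem hyM
      have hxM : x ∉ M := by
        intro hxM
        have hMℓ : M = ℓ := line_unique hpls hxy hMmem hℓmem hxM hyM hxℓ hyℓ
        rw [hMℓ] at hzM
        exact hzℓ hzM
      have hT' : ({p ∈ M | G.Adj x p}.ncard : ℝ) = α + 1 :=
        psi hconn hcnt hdle exD hbbf hccf hb hD (line_clique hMmem) hMcard hxM hzM hxz
      have hwex : ∃ w ∈ M, ¬ G.Adj x w := by
        by_contra hcon
        push_neg at hcon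
        have hsub : M ⊆ {p ∈ M | G.Adj x p} := fun p hp => ⟨hp, hcon p hp⟩
        have h0 := Set.ncard_le_ncard hsub (Set.toFinite _)
        have hc1 : (M.ncard : ℝ) ≤ ({p ∈ M | G.Adj x p}.ncard : ℝ) := by exact_mod_cast h0
        have hβα : (0:ℝ) < β - α := by
          have h3 := beta_sub_pos hconn hcnt exD hbbf hb hD 1 (by omega)
          rwa [gauss_one, mul_one] at h3
        rw [hMcard, hT'] at hc1
        linarith
      obtain ⟨w, hwM, hnxw⟩ := hwex
      have hwx : w ≠ x := fun hh => hxM (hh ▸ hwM)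
      have hzwne : z ≠ w := by
        rintro rfl
        exact hnxw hxz
      have hzw : G.Adj z w := (line_clique hMmem) hzM hwM hzwne
      have hw2 : G.dist x w = 2 := by
        have hub : G.dist x w ≤ 2 := by
          have t2 : G.dist z w = 1 := dist_eq_one_iff_adj.mpr hzw
          have htri := hconn.dist_triangle (u := x) (v := z) (w := w)
          omega
        have hne0 : G.dist x w ≠ 0 := fun hh => hwx ((hconn.dist_eq_zero_iff.mp hh).symm)
        have hne1 : G.dist x w ≠ 1 := fun hh => hnxw (dist_eq_one_iff_adj.mp hh)
        omega
      exact alpha_le_b_aux hconn hcnt hdle exD hbbf hccf hb hD hpls hDx hMmem hMcard hxM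
        hwM hw2 hzM hxz
  · -- Case d(x,y) = 2
    obtain ⟨z, hzy, hz1⟩ := exists_prev hconn (show G.dist x y = 1 + 1 from h2)
    have hxz : G.Adj x z := dist_eq_one_iff_adj.mp hz1
    obtain ⟨M, ⟨hMmem, hyM, hzM⟩, -⟩ := hpls y z hzy.symm
    have hMcard := hDy M hMmem hyM
    have hxy_nadj : ¬ G.Adj x y := by
      intro hh
      rw [dist_eq_one_iff_adj.mpr hh] at h2
      omega
    have hxM : x ∉ M := by
      intro hxM
      exact hxy_nadj ((line_clique hMmem) hxM hyM hxy)
    exact alpha_le_b_aux hconn hcnt hdle exD hbbf hccf hb hD hpls hDx hMmem hMcard hxM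
      hyM h2 hzM hxz
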